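/- For every odd prime number q there exists a prime number ℓ' with ℓ' ≠ q such that the multiplicative order of the residue class of q in (ℤ/ℓ'ℤ)ˣ is exactly 7; in particular ℓ' ≡ 1 (mod 7) and the image of q in ℤ/ℓ'ℤ is a primitive 7th root of unity. -/
import Mathlib

open Polynomial Finset

/-- **Zsygmondy-type statement.** For every odd prime `q` there is a prime `ℓ' ≠ q` such
that the residue class of `q` in `ℤ/ℓ'ℤ` has multiplicative order exactly `7`; in
particular `ℓ' ≡ 1 (mod 7)` (so `q mod ℓ'` is a primitive 7th root of unity). -/
theorem exists_prime_with_order_seven (q : ℕ) (hq : q.Prime) (hodd : q ≠ 2) :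
    ∃ ℓ' : ℕ, ℓ'.Prime ∧ ℓ' ≠ q ∧ orderOf (q : ZMod ℓ') = 7 ∧ ℓ' % 7 = 1 := by
  have hq3 : 3 ≤ q := by
    have := hq.two_le
    omega
  set N : ℕ := ∑ i ∈ range 7, q ^ i with hN
  have hNbig : 49 < N := by
    have h : ∑ i ∈ range 7, 3 ^ i ≤ N :=
      Finset.sum_le_sum fun i _ => Nat.pow_le_pow_left hq3 i
    have : (∑ i ∈ range 7, 3 ^ i) = 1093 := by decide
    omega
  have h49 : ¬ (49 ∣ N) := by
    intro h
    have h0 : (N : ZMod 49) = 0 := (ZMod.natCast_eq_zero_iff _ _).2 h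
    have hsum : (N : ZMod 49) = ∑ i ∈ range 7, (q : ZMod 49) ^ i := by
      rw [hN]; push_cast; rfl
    have key : ∀ x : ZMod 49, ∑ i ∈ range 7, x ^ i ≠ 0 := by decide
    exact key _ (hsum ▸ h0)
  obtain ⟨p, hp, hpN, hp7⟩ : ∃ p, p.Prime ∧ p ∣ N ∧ p ≠ 7 := by
    by_cases h7 : 7 ∣ N
    · obtain ⟨m, hm⟩ := h7
      have hm1 : 2 ≤ m := by nlinarith
      refine ⟨m.minFac, Nat.minFac_prime (by omega), hm ▸ (m.minFac_dvd).mul_left 7, ?_⟩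
      intro h
      exact h49 (hm ▸ mul_dvd_mul (dvd_refl 7) (h ▸ m.minFac_dvd))
    · exact ⟨N.minFac, Nat.minFac_prime (by omega), N.minFac_dvd,
        fun h => h7 (h ▸ N.minFac_dvd)⟩
  haveI : Fact p.Prime := ⟨hp⟩
  haveI : Fact (Nat.Prime 7) := ⟨by norm_num⟩
  have hNp : (N : ZMod p) = 0 := (ZMod.natCast_eq_zero_iff _ _).2 hpN
  haveI : NeZero ((7 : ℕ) : ZMod p) := ⟨by
    rw [Ne, ZMod.natCast_eq_zero_iff]
    exact fun h => hp7 ((Nat.prime_dvd_prime_iff_eq hp (by norm_num)).1 h)⟩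
  have hroot : IsPrimitiveRoot (q : ZMod p) 7 := by
    have hr : IsRoot (cyclotomic 7 (ZMod p)) (q : ZMod p) := by
      rw [cyclotomic_prime, IsRoot.def, eval_finset_sum]
      have h' := hNp
      rw [hN] at h'
      push_cast at h'
      simpa using h'
    exact isRoot_cyclotomic_iff.1 hr
  have horder : orderOf (q : ZMod p) = 7 := hroot.eq_orderOf.symm
  have hqN : ¬ q ∣ N := by
    intro h
    have h0 : (N : ZMod q) = 0 := (ZMod.natCast_eq_zero_iff _ _).2 h
    haveI : Fact q.Prime := ⟨hq⟩
    have h1 : (N : ZMod q) = 1 := by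
      rw [hN]; push_cast
      rw [Finset.sum_eq_single 0 (fun i _ hi => by
        rw [ZMod.natCast_self, zero_pow hi]) (by simp)]
      simp
    rw [h1] at h0
    exact one_ne_zero h0
  have hpq : p ≠ q := fun h => hqN (h ▸ hpN)
  have hq0 : (q : ZMod p) ≠ 0 := by
    rw [Ne, ZMod.natCast_eq_zero_iff]
    exact fun h => hpq (((Nat.prime_dvd_prime_iff_eq hp hq).1 h))
  have hdvd : 7 ∣ p - 1 := horder ▸ ZMod.orderOf_dvd_card_sub_one hq0
  have hp2 := hp.two_le
  refine ⟨p, hp, hpq, horder, ?_⟩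
  omega
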